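/- arXiv:1811.12730 — 16 statements merged into one kernel-verified Lean document; each statement's English description precedes it below -/
import Mathlib

section
/- Let x > 0 be a real number. Define p, q : ℕ → ℝ (the numerators and denominators of the convergents of the continued fraction F(x) = [x, 1/x, x², 1/x², x³, 1/x³, …]) by p 0 = x, q 0 = 1, p 1 = 2, q 1 = 1/x, and for all j ≥ 1: p (j+1) = c (j+1) · p j + p (j−1) and q (j+1) = c (j+1) · q j + q (j−1), where c (2m) = x^(m+1) and c (2m+1) = x^(−(m+1)) for m ≥ 0. Then for every j ≥ 0 one has p j / q j = A j / B j; that is, the continued fractions F(x) and F̃(x) have the same sequence of convergents. -/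
/-!
`F̃(x)` is obtained from `F(x)` by an equivalence transformation: with `r (2m) = 1` and
`r (2m+1) = x^(-(m+1))`, the convergent numerators and denominators of `F(x)` are
`p j = r j * A j` and `q j = r j * B j`. Numerator and denominator are rescaled by the same
nonzero factor, so the convergents agree.
-/

section EquivalenceTransformation

variable {x : ℝ} {P U c : ℕ → ℝ}

theorem eq_rescale_of_recurrence (hx : x ≠ 0)
    (hce : ∀ m, c (2 * m) = x ^ (m + 1)) (hco : ∀ m, c (2 * m + 1) = (x ^ (m + 1))⁻¹)
    (hP0 : P 0 = U 0) (hP1 : P 1 = x⁻¹ * U 1)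
    (hP : ∀ j, 1 ≤ j → P (j + 1) = c (j + 1) * P j + P (j - 1))
    (hUe : ∀ j, 1 ≤ j → Even (j + 1) → U (j + 1) = x * U j + U (j - 1))
    (hUo : ∀ j, 1 ≤ j → Odd (j + 1) → U (j + 1) = U j + x * U (j - 1)) (m : ℕ) :
    P (2 * m) = U (2 * m) ∧ P (2 * m + 1) = (x ^ (m + 1))⁻¹ * U (2 * m + 1) := by
  induction m with
  | zero => simpa using ⟨hP0, hP1⟩
  | succ m ih =>
    obtain ⟨hPeven, hPodd⟩ := ih
    have hUeven : U (2 * m + 2) = x * U (2 * m + 1) + U (2 * m) := by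
      simpa using hUe (2 * m + 1) (by omega) ⟨m + 1, by ring⟩
    have hUodd : U (2 * m + 3) = U (2 * m + 2) + x * U (2 * m + 1) := by
      simpa using hUo (2 * m + 2) (by omega) ⟨m + 1, by ring⟩
    have hPeven' : P (2 * m + 2) = x ^ (m + 2) * P (2 * m + 1) + P (2 * m) := by
      rw [← hce (m + 1)]
      simpa [mul_add] using hP (2 * m + 1) (by omega)
    have hPodd' : P (2 * m + 3) = (x ^ (m + 2))⁻¹ * P (2 * m + 2) + P (2 * m + 1) := by
      rw [← hco (m + 1)]
      simpa [mul_add] using hP (2 * m + 2) (by omega)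
    have hnext : P (2 * m + 2) = U (2 * m + 2) := by
      rw [hPeven', hPodd, hPeven, hUeven]
      field_simp
      ring
    refine ⟨hnext, ?_⟩
    rw [show 2 * (m + 1) + 1 = 2 * m + 3 by ring, hPodd', hnext, hPodd, hUodd]
    field_simp
    ring

end EquivalenceTransformation

theorem stmt_0 (x : ℝ) (hx : 0 < x)
    (A B p q c : ℕ → ℝ)
    (hA0 : A 0 = x) (hA1 : A 1 = 2 * x) (hB0 : B 0 = 1) (hB1 : B 1 = 1)
    (hAe : ∀ j, 1 ≤ j → Even (j + 1) → A (j + 1) = x * A j + A (j - 1))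
    (hAo : ∀ j, 1 ≤ j → Odd (j + 1) → A (j + 1) = A j + x * A (j - 1))
    (hBe : ∀ j, 1 ≤ j → Even (j + 1) → B (j + 1) = x * B j + B (j - 1))
    (hBo : ∀ j, 1 ≤ j → Odd (j + 1) → B (j + 1) = B j + x * B (j - 1))
    (hce : ∀ m, c (2 * m) = x ^ (m + 1))
    (hco : ∀ m, c (2 * m + 1) = (x ^ (m + 1))⁻¹)
    (hp0 : p 0 = x) (hq0 : q 0 = 1) (hp1 : p 1 = 2) (hq1 : q 1 = 1 / x)
    (hp : ∀ j, 1 ≤ j → p (j + 1) = c (j + 1) * p j + p (j - 1))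
    (hq : ∀ j, 1 ≤ j → q (j + 1) = c (j + 1) * q j + q (j - 1)) :
    ∀ j, p j / q j = A j / B j := by
  have hx0 : x ≠ 0 := hx.ne'
  have hpA := eq_rescale_of_recurrence hx0 hce hco (hp0.trans hA0.symm)
    (by rw [hp1, hA1]; field_simp) hp hAe hAo
  have hqB := eq_rescale_of_recurrence hx0 hce hco (hq0.trans hB0.symm)
    (by rw [hq1, hB1]; ring) hq hBe hBo
  intro j
  obtain ⟨m, rfl | rfl⟩ := Nat.even_or_odd' j
  · rw [(hpA m).1, (hqB m).1]
  · rw [(hpA m).2, (hqB m).2, mul_div_mul_left _ _ (by positivity)]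
end

section
/- For every real number x, in the ring of formal power series ℝ⟦T⟧ one has the generating-function identities (1 − (2x+1)·T + x·T²) · Σ_{j≥0} B (2j+1) · T^j = 1 and (1 − (2x+1)·T + x·T²) · Σ_{j≥0} B (2j) · T^j = 1 − x·T. -/
open PowerSeries

theorem PowerSeries.mul_mk_eq_of_recurrence {R : Type*} [CommRing R] (a b : R) (u : ℕ → R)
    (hu : ∀ n, u (n + 2) = a * u (n + 1) - b * u n) :
    (1 - C a * X + C b * X ^ 2) * mk u = C (u 0) + C (u 1 - a * u 0) * X := by
  ext (_ | _ | n)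
  · simp
  · simp [sub_mul, add_mul, mul_assoc, coeff_succ_X_mul, coeff_X_pow_mul']
  · simp [sub_mul, add_mul, mul_assoc, coeff_succ_X_mul, coeff_X_pow_mul', hu]

theorem stmt_3_general (x : ℝ) (B : ℕ → ℝ)
    (hB0 : B 0 = 1) (hB1 : B 1 = 1) (hB2 : B 2 = x + 1) (hB3 : B 3 = 2 * x + 1)
    (hB : ∀ j, B (j + 4) = (2 * x + 1) * B (j + 2) - x * B j) :
    (1 - (PowerSeries.C : ℝ →+* PowerSeries ℝ) (2 * x + 1) * PowerSeries.X
        + (PowerSeries.C : ℝ →+* PowerSeries ℝ) x * PowerSeries.X ^ 2) *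
      PowerSeries.mk (fun j => B (2 * j + 1)) = 1 ∧
    (1 - (PowerSeries.C : ℝ →+* PowerSeries ℝ) (2 * x + 1) * PowerSeries.X
        + (PowerSeries.C : ℝ →+* PowerSeries ℝ) x * PowerSeries.X ^ 2) *
      PowerSeries.mk (fun j => B (2 * j)) =
        1 - (PowerSeries.C : ℝ →+* PowerSeries ℝ) x * PowerSeries.X := by
  have hOdd : ∀ n, B (2 * (n + 2) + 1) = (2 * x + 1) * B (2 * (n + 1) + 1) - x * B (2 * n + 1) :=
    fun n => hB (2 * n + 1)
  have hEven : ∀ n, B (2 * (n + 2)) = (2 * x + 1) * B (2 * (n + 1)) - x * B (2 * n) :=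
    fun n => hB (2 * n)
  constructor
  · rw [mul_mk_eq_of_recurrence _ _ _ hOdd]
    simp [hB1, hB3]
  · rw [mul_mk_eq_of_recurrence _ _ _ hEven]
    simp only [mul_zero, mul_one, hB0, hB2, map_one,
      show x + 1 - (2 * x + 1) = -x by ring, map_neg]
    ring

theorem stmt_3 (x : ℝ) (A B : ℕ → ℝ)
    (hA0 : A 0 = x) (hA1 : A 1 = 2 * x)
    (hA2 : A 2 = x * (2 * x + 1)) (hA3 : A 3 = x * (4 * x + 1))
    (hB0 : B 0 = 1) (hB1 : B 1 = 1) (hB2 : B 2 = x + 1) (hB3 : B 3 = 2 * x + 1)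
    (hA : ∀ j, A (j + 4) = (2 * x + 1) * A (j + 2) - x * A j)
    (hB : ∀ j, B (j + 4) = (2 * x + 1) * B (j + 2) - x * B j) :
    (1 - (PowerSeries.C : ℝ →+* PowerSeries ℝ) (2 * x + 1) * PowerSeries.X
        + (PowerSeries.C : ℝ →+* PowerSeries ℝ) x * PowerSeries.X ^ 2) *
      PowerSeries.mk (fun j => B (2 * j + 1)) = 1 ∧
    (1 - (PowerSeries.C : ℝ →+* PowerSeries ℝ) (2 * x + 1) * PowerSeries.X
        + (PowerSeries.C : ℝ →+* PowerSeries ℝ) x * PowerSeries.X ^ 2) *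
      PowerSeries.mk (fun j => B (2 * j)) =
        1 - (PowerSeries.C : ℝ →+* PowerSeries ℝ) x * PowerSeries.X :=
  stmt_3_general x B hB0 hB1 hB2 hB3 hB
end

section
/- For every real number x the following relations hold: A (2j+1) = 2·A (2j) − A (2j−2) for all j ≥ 1; x·B (2j+1) = A (2j) for all j ≥ 0; x·B (2j) = A (2j) − x·A (2j−2) for all j ≥ 1; and B (2j) = B (2j+1) − x·B (2j−1) for all j ≥ 1. -/
/-!
Both `A` and `B` satisfy a recurrence of step two, so each of their subsequences
`n ↦ s (2 * n + k)` solves the linear recurrence `u (n + 2) = (2x + 1) u (n + 1) - x u n`.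
Its solutions form a module that is determined by the first two terms, and each of the four
identities says that a linear combination of such subsequences vanishes; it therefore suffices
to check it at `n = 0` and `n = 1`.
-/

def convergentRec (x : ℝ) : LinearRecurrence ℝ := ⟨2, ![-x, 2 * x + 1]⟩

namespace convergentRec

variable {x : ℝ}

lemma isSolution_iff {u : ℕ → ℝ} :
    (convergentRec x).IsSolution u ↔ ∀ n, u (n + 2) = (2 * x + 1) * u (n + 1) - x * u n := by
  show (∀ n, u (n + 2) = ∑ i : Fin 2, ![-x, 2 * x + 1] i * u (n + i)) ↔ _
  simp only [Fin.sum_univ_two, Matrix.cons_val_zero, Matrix.cons_val_one, Fin.val_zero,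
    Fin.val_one, add_zero, neg_mul, neg_add_eq_sub]

lemma eq_zero_of_mem_solSpace {u : ℕ → ℝ} (hu : u ∈ (convergentRec x).solSpace)
    (h0 : u 0 = 0) (h1 : u 1 = 0) : ∀ n, u n = 0 :=
  congrFun <| ((convergentRec x).eq_iff_eqOn_range_order u 0 hu
    (convergentRec x).solSpace.zero_mem).2 fun n hn => by
      have : n < 2 := Finset.mem_range.1 hn
      interval_cases n <;> assumption

lemma comp_two_mul_add_mem_solSpace {s : ℕ → ℝ}
    (hs : ∀ j, s (j + 4) = (2 * x + 1) * s (j + 2) - x * s j) (k : ℕ) :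
    (fun j => s (2 * j + k)) ∈ (convergentRec x).solSpace :=
  isSolution_iff (u := fun j => s (2 * j + k)) |>.2 fun n => by
    simpa only [mul_add, add_right_comm _ _ k, add_assoc] using hs (2 * n + k)

end convergentRec

open convergentRec in
theorem stmt_4 (x : ℝ) (A B : ℕ → ℝ)
    (hA0 : A 0 = x) (hA1 : A 1 = 2 * x)
    (hA2 : A 2 = x * (2 * x + 1)) (hA3 : A 3 = x * (4 * x + 1))
    (hB0 : B 0 = 1) (hB1 : B 1 = 1) (hB2 : B 2 = x + 1) (hB3 : B 3 = 2 * x + 1)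
    (hA : ∀ j, A (j + 4) = (2 * x + 1) * A (j + 2) - x * A j)
    (hB : ∀ j, B (j + 4) = (2 * x + 1) * B (j + 2) - x * B j) :
    (∀ j, 1 ≤ j → A (2 * j + 1) = 2 * A (2 * j) - A (2 * j - 2)) ∧
    (∀ j, x * B (2 * j + 1) = A (2 * j)) ∧
    (∀ j, 1 ≤ j → x * B (2 * j) = A (2 * j) - x * A (2 * j - 2)) ∧
    (∀ j, 1 ≤ j → B (2 * j) = B (2 * j + 1) - x * B (2 * j - 1)) := by
  have hA4 : A 4 = x * (4 * x ^ 2 + 3 * x + 1) := by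
    linear_combination hA 0 + (2 * x + 1) * hA2 - x * hA0
  have hA5 : A 5 = x * (8 * x ^ 2 + 4 * x + 1) := by
    linear_combination hA 1 + (2 * x + 1) * hA3 - x * hA1
  have hB4 : B 4 = 2 * x ^ 2 + 2 * x + 1 := by
    linear_combination hB 0 + (2 * x + 1) * hB2 - x * hB0
  have hB5 : B 5 = 4 * x ^ 2 + 3 * x + 1 := by
    linear_combination hB 1 + (2 * x + 1) * hB3 - x * hB1
  have a := comp_two_mul_add_mem_solSpace hA
  have b := comp_two_mul_add_mem_solSpace hB
  have c1 := eq_zero_of_mem_solSpace (u := fun k => A (2 * k + 3) + A (2 * k) - 2 * A (2 * k + 2))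
    (sub_mem (add_mem (a 3) (a 0)) (Submodule.smul_mem _ 2 (a 2)))
    (by linear_combination hA3 + hA0 - 2 * hA2) (by linear_combination hA5 + hA2 - 2 * hA4)
  have c2 := eq_zero_of_mem_solSpace (u := fun k => x * B (2 * k + 1) - A (2 * k))
    (sub_mem (Submodule.smul_mem _ x (b 1)) (a 0))
    (by linear_combination x * hB1 - hA0) (by linear_combination x * hB3 - hA2)
  have c3 := eq_zero_of_mem_solSpace
    (u := fun k => x * B (2 * k + 2) - A (2 * k + 2) + x * A (2 * k))
    (add_mem (sub_mem (Submodule.smul_mem _ x (b 2)) (a 2)) (Submodule.smul_mem _ x (a 0)))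
    (by linear_combination x * hB2 - hA2 + x * hA0) (by linear_combination x * hB4 - hA4 + x * hA2)
  have c4 := eq_zero_of_mem_solSpace (u := fun k => B (2 * k + 2) - B (2 * k + 3) + x * B (2 * k + 1))
    (add_mem (sub_mem (b 2) (b 3)) (Submodule.smul_mem _ x (b 1)))
    (by linear_combination hB2 - hB3 + x * hB1) (by linear_combination hB4 - hB5 + x * hB3)
  refine ⟨fun j hj => ?_, fun j => by linear_combination c2 j, fun j hj => ?_, fun j hj => ?_⟩
  all_goals obtain ⟨k, rfl⟩ := Nat.exists_eq_add_of_le' hj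
  · rw [show 2 * (k + 1) = 2 * k + 2 by ring, Nat.add_sub_cancel]
    linear_combination c1 k
  · rw [show 2 * (k + 1) = 2 * k + 2 by ring, Nat.add_sub_cancel]
    linear_combination c3 k
  · rw [show 2 * (k + 1) = 2 * k + 2 by ring, show 2 * k + 2 - 1 = 2 * k + 1 by omega]
    linear_combination c4 k
end

section
/- For every real number x and every j ≥ 2, one has 2x·B j = A j + x·B (j−2). -/
/-! The shift `(A k, B k) ↦ (A (k + 2), B (k + 2))` is multiplication by the matrix
`M = [[2x, x], [1, 1]]`: this holds for `k = 0, 1` by the initial values, and it propagates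
because the four-term recurrence `u (j + 4) = (2x + 1) u (j + 2) - x u j` is Cayley–Hamilton for
`M` (trace `2x + 1`, determinant `x`). The identity then reads
`A (k + 2) + x B k = 2x A k + 2x B k = 2x B (k + 2)`. -/

def ShiftTwoByMatrix (x : ℝ) (A B : ℕ → ℝ) (k : ℕ) : Prop :=
  A (k + 2) = 2 * x * A k + x * B k ∧ B (k + 2) = A k + B k

section

variable {x : ℝ} {A B : ℕ → ℝ}

theorem ShiftTwoByMatrix.add_two
    (hA : ∀ j, A (j + 4) = (2 * x + 1) * A (j + 2) - x * A j)
    (hB : ∀ j, B (j + 4) = (2 * x + 1) * B (j + 2) - x * B j)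
    {k : ℕ} (h : ShiftTwoByMatrix x A B k) : ShiftTwoByMatrix x A B (k + 2) := by
  obtain ⟨hAk, hBk⟩ := h
  constructor
  · rw [hA k, hAk, hBk]; ring
  · rw [hB k, hAk, hBk]; ring

theorem shiftTwoByMatrix_of_recurrence
    (hA0 : A 0 = x) (hA1 : A 1 = 2 * x)
    (hA2 : A 2 = x * (2 * x + 1)) (hA3 : A 3 = x * (4 * x + 1))
    (hB0 : B 0 = 1) (hB1 : B 1 = 1) (hB2 : B 2 = x + 1) (hB3 : B 3 = 2 * x + 1)
    (hA : ∀ j, A (j + 4) = (2 * x + 1) * A (j + 2) - x * A j)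
    (hB : ∀ j, B (j + 4) = (2 * x + 1) * B (j + 2) - x * B j) :
    ∀ k, ShiftTwoByMatrix x A B k := by
  refine Nat.twoStepInduction ?_ ?_ fun k hk _ => hk.add_two hA hB
  · exact ⟨by rw [hA2, hA0, hB0]; ring, by rw [hB2, hA0, hB0]⟩
  · exact ⟨by rw [hA3, hA1, hB1]; ring, by rw [hB3, hA1, hB1]⟩

end

theorem stmt_5 (x : ℝ) (A B : ℕ → ℝ)
    (hA0 : A 0 = x) (hA1 : A 1 = 2 * x)
    (hA2 : A 2 = x * (2 * x + 1)) (hA3 : A 3 = x * (4 * x + 1))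
    (hB0 : B 0 = 1) (hB1 : B 1 = 1) (hB2 : B 2 = x + 1) (hB3 : B 3 = 2 * x + 1)
    (hA : ∀ j, A (j + 4) = (2 * x + 1) * A (j + 2) - x * A j)
    (hB : ∀ j, B (j + 4) = (2 * x + 1) * B (j + 2) - x * B j) :
    ∀ j, 2 ≤ j → 2 * x * B j = A j + x * B (j - 2) := by
  intro j hj
  obtain ⟨k, rfl⟩ : ∃ k, j = k + 2 := ⟨j - 2, by omega⟩
  obtain ⟨hAk, hBk⟩ :=
    shiftTwoByMatrix_of_recurrence hA0 hA1 hA2 hA3 hB0 hB1 hB2 hB3 hA hB k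
  rw [Nat.add_sub_cancel, hAk, hBk]
  ring
end

section
/- For every real number x and every k ≥ 0, the B polynomials are weighted sums of the A polynomials: 2^k·x·B (2k) = A 0 + Σ_{j=1}^{k} 2^{j−1}·A (2j), and 2^{k+1}·x·B (2k+1) = Σ_{j=0}^{k} 2^{j}·A (2j+1). -/
/-!
For `n ≥ 2` the numerators are determined by the denominators, `A n = 2x·B n - x·B (n-2)`:
the difference of the two sides satisfies the same recurrence and vanishes at the four initial
indices. Hence `2^(k+1)·x·B (2k+2) - 2^k·x·B (2k) = 2^k·A (2k+2)`, and likewise for odd indices,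
so both identities follow by telescoping.
-/

theorem eq_zero_of_recurrence_of_initial_eq_zero {R : Type*} [CommRing R] {a b : R} {u : ℕ → R}
    (hu : ∀ n, u (n + 4) = a * u (n + 2) + b * u n)
    (h0 : u 0 = 0) (h1 : u 1 = 0) (h2 : u 2 = 0) (h3 : u 3 = 0) (n : ℕ) : u n = 0 := by
  induction n using Nat.strong_induction_on with
  | _ n ih =>
    match n, ih with
    | 0, _ => exact h0
    | 1, _ => exact h1
    | 2, _ => exact h2
    | 3, _ => exact h3
    | m + 4, ih => rw [hu, ih (m + 2) (by omega), ih m (by omega), mul_zero, mul_zero, add_zero]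

theorem num_add_two_eq_of_recurrence {R : Type*} [CommRing R] {x : R} {A B : ℕ → R}
    (hA0 : A 0 = x) (hA1 : A 1 = 2 * x)
    (hA2 : A 2 = x * (2 * x + 1)) (hA3 : A 3 = x * (4 * x + 1))
    (hB0 : B 0 = 1) (hB1 : B 1 = 1) (hB2 : B 2 = x + 1) (hB3 : B 3 = 2 * x + 1)
    (hA : ∀ j, A (j + 4) = (2 * x + 1) * A (j + 2) - x * A j)
    (hB : ∀ j, B (j + 4) = (2 * x + 1) * B (j + 2) - x * B j) (n : ℕ) :
    A (n + 2) = 2 * x * B (n + 2) - x * B n := by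
  have hzero := eq_zero_of_recurrence_of_initial_eq_zero (a := 2 * x + 1) (b := -x)
    (u := fun n ↦ A (n + 2) - 2 * x * B (n + 2) + x * B n)
    (fun n ↦ by simp only [hA (n + 2), hB (n + 2), hB n]; ring)
    (by simp only [hA2, hB2, hB0]; ring) (by simp only [hA3, hB3, hB1]; ring)
    (by simp only [hA 0, hB 0, hA2, hA0, hB2, hB0]; ring)
    (by simp only [hA 1, hB 1, hA3, hA1, hB3, hB1]; ring) n
  linear_combination hzero

theorem stmt_6 (x : ℝ) (A B : ℕ → ℝ)
    (hA0 : A 0 = x) (hA1 : A 1 = 2 * x)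
    (hA2 : A 2 = x * (2 * x + 1)) (hA3 : A 3 = x * (4 * x + 1))
    (hB0 : B 0 = 1) (hB1 : B 1 = 1) (hB2 : B 2 = x + 1) (hB3 : B 3 = 2 * x + 1)
    (hA : ∀ j, A (j + 4) = (2 * x + 1) * A (j + 2) - x * A j)
    (hB : ∀ j, B (j + 4) = (2 * x + 1) * B (j + 2) - x * B j) :
    ∀ k, 2 ^ k * x * B (2 * k) = A 0 + ∑ j ∈ Finset.Icc 1 k, 2 ^ (j - 1) * A (2 * j) ∧
      2 ^ (k + 1) * x * B (2 * k + 1) = ∑ j ∈ Finset.range (k + 1), 2 ^ j * A (2 * j + 1) := by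
  have hnum := num_add_two_eq_of_recurrence hA0 hA1 hA2 hA3 hB0 hB1 hB2 hB3 hA hB
  intro k
  induction k with
  | zero => simp [hB0, hA0, hB1, hA1]
  | succ k ih =>
    constructor
    · rw [Finset.sum_Icc_succ_top (by omega), Nat.add_sub_cancel, ← add_assoc, ← ih.1,
        show 2 * (k + 1) = 2 * k + 2 by ring, hnum]
      ring
    · rw [Finset.sum_range_succ, ← ih.2, show 2 * (k + 1) + 1 = 2 * k + 1 + 2 by ring, hnum]
      ring
end

section
/- For every real number x and every j ≥ 1, one has A (2j−2)·A (2j+2) − A (2j)² = −x^(j+2) and B (2j−2)·B (2j+2) − B (2j)² = x^(j+1). -/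
/-!
Along the even indices both `A` and `B` satisfy the three-term recurrence
`u (n + 2) = (2x + 1) u (n + 1) - x u n`, and for any recurrence `u (n + 2) = a u (n + 1) - b u n`
the determinant `u n * u (n + 2) - u (n + 1) ^ 2` is multiplied by `b` at each step. The initial
values give `-x ^ 3` for `A` and `x ^ 2` for `B`.
-/

theorem mul_sub_sq_eq_pow_mul_of_recurrence {R : Type*} [CommRing R] (u : ℕ → R) (a b : R)
    (h : ∀ n, u (n + 2) = a * u (n + 1) - b * u n) (n : ℕ) :
    u n * u (n + 2) - u (n + 1) ^ 2 = b ^ n * (u 0 * u 2 - u 1 ^ 2) := by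
  induction n with
  | zero => ring
  | succ n ih =>
    have step : u (n + 1) * u (n + 3) - u (n + 2) ^ 2 = b * (u n * u (n + 2) - u (n + 1) ^ 2) := by
      linear_combination u (n + 1) * h (n + 1) - u (n + 2) * h n
    rw [step, ih]
    ring

theorem even_mul_sub_sq_eq_pow_mul_of_recurrence {R : Type*} [CommRing R] (u : ℕ → R) (a b : R)
    (h : ∀ j, u (j + 4) = a * u (j + 2) - b * u j) (k : ℕ) :
    u (2 * k) * u (2 * k + 4) - u (2 * k + 2) ^ 2 = b ^ k * (u 0 * u 4 - u 2 ^ 2) := by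
  simpa only [mul_add, mul_zero] using
    mul_sub_sq_eq_pow_mul_of_recurrence (fun n ↦ u (2 * n)) a b (fun n ↦ h (2 * n)) k

theorem stmt_7_general (x : ℝ) (A B : ℕ → ℝ)
    (hA0 : A 0 = x)
    (hA2 : A 2 = x * (2 * x + 1))
    (hB0 : B 0 = 1) (hB2 : B 2 = x + 1)
    (hA : ∀ j, A (j + 4) = (2 * x + 1) * A (j + 2) - x * A j)
    (hB : ∀ j, B (j + 4) = (2 * x + 1) * B (j + 2) - x * B j) :
    ∀ j, 1 ≤ j →
      A (2 * j - 2) * A (2 * j + 2) - A (2 * j) ^ 2 = -x ^ (j + 2) ∧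
      B (2 * j - 2) * B (2 * j + 2) - B (2 * j) ^ 2 = x ^ (j + 1) := by
  intro j hj
  obtain ⟨k, rfl⟩ : ∃ k, j = k + 1 := ⟨j - 1, by omega⟩
  have hidx : 2 * (k + 1) - 2 = 2 * k ∧ 2 * (k + 1) = 2 * k + 2 := by omega
  rw [hidx.1, hidx.2, show 2 * k + 2 + 2 = 2 * k + 4 by rfl,
    even_mul_sub_sq_eq_pow_mul_of_recurrence A _ _ hA,
    even_mul_sub_sq_eq_pow_mul_of_recurrence B _ _ hB, hA 0, hB 0, hA0, hA2, hB0, hB2]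
  constructor <;> ring

theorem stmt_7 (x : ℝ) (A B : ℕ → ℝ)
    (hA0 : A 0 = x) (hA1 : A 1 = 2 * x)
    (hA2 : A 2 = x * (2 * x + 1)) (hA3 : A 3 = x * (4 * x + 1))
    (hB0 : B 0 = 1) (hB1 : B 1 = 1) (hB2 : B 2 = x + 1) (hB3 : B 3 = 2 * x + 1)
    (hA : ∀ j, A (j + 4) = (2 * x + 1) * A (j + 2) - x * A j)
    (hB : ∀ j, B (j + 4) = (2 * x + 1) * B (j + 2) - x * B j) :
    ∀ j, 1 ≤ j →
      A (2 * j - 2) * A (2 * j + 2) - A (2 * j) ^ 2 = -x ^ (j + 2) ∧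
      B (2 * j - 2) * B (2 * j + 2) - B (2 * j) ^ 2 = x ^ (j + 1) :=
  stmt_7_general x A B hA0 hA2 hB0 hB2 hA hB
end

section
/- For every real number x and every j ≥ 2, one has A (2j−3)·A (2j+1) − A (2j−1)² = x^j and B (2j−3)·B (2j+1) − B (2j−1)² = −x^(j−1). -/
/-!
Both sequences satisfy a recurrence `u (n + 4) = p * u (n + 2) - q * u n`, and for any such
sequence the Cassini-type determinant `u n * u (n + 4) - u (n + 2) ^ 2` gets multiplied by `q`
when `n` advances by two. With `q = x`, the claim reduces to the starting values
`x ^ 2` and `-x` at `n = 1`, read off from `A 1, A 3, A 5` and `B 1, B 3, B 5`.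
-/

section

variable {R : Type*} [CommRing R]

def cassini (u : ℕ → R) (n : ℕ) : R :=
  u n * u (n + 4) - u (n + 2) ^ 2

variable {u : ℕ → R} {p q : R}

theorem cassini_add_two (h : ∀ n, u (n + 4) = p * u (n + 2) - q * u n) (n : ℕ) :
    cassini u (n + 2) = q * cassini u n := by
  unfold cassini
  linear_combination u (n + 2) * h (n + 2) - u (n + 4) * h n

theorem cassini_add_two_mul (h : ∀ n, u (n + 4) = p * u (n + 2) - q * u n) (n k : ℕ) :
    cassini u (n + 2 * k) = q ^ k * cassini u n := by
  induction k with
  | zero => simp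
  | succ k ih => rw [Nat.mul_succ, ← add_assoc, cassini_add_two h, ih, pow_succ', mul_assoc]

end

theorem stmt_8_general (x : ℝ) (A B : ℕ → ℝ)
    (hA1 : A 1 = 2 * x)
    (hA3 : A 3 = x * (4 * x + 1))
    (hB1 : B 1 = 1) (hB3 : B 3 = 2 * x + 1)
    (hA : ∀ j, A (j + 4) = (2 * x + 1) * A (j + 2) - x * A j)
    (hB : ∀ j, B (j + 4) = (2 * x + 1) * B (j + 2) - x * B j) :
    ∀ j, 2 ≤ j →
      A (2 * j - 3) * A (2 * j + 1) - A (2 * j - 1) ^ 2 = x ^ j ∧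
      B (2 * j - 3) * B (2 * j + 1) - B (2 * j - 1) ^ 2 = -x ^ (j - 1) := by
  have hA_one : cassini A 1 = x ^ 2 := by
    unfold cassini
    rw [hA 1, hA1, hA3]
    ring
  have hB_one : cassini B 1 = -x := by
    unfold cassini
    rw [hB 1, hB1, hB3]
    ring
  intro j hj
  obtain ⟨k, rfl⟩ := Nat.exists_eq_add_of_le' hj
  obtain ⟨h₁, h₂, h₃, h₄⟩ : 2 * (k + 2) - 3 = 1 + 2 * k ∧ 2 * (k + 2) + 1 = 1 + 2 * k + 4 ∧
      2 * (k + 2) - 1 = 1 + 2 * k + 2 ∧ k + 2 - 1 = k + 1 := by omega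
  rw [h₁, h₂, h₃, h₄]
  refine ⟨?_, ?_⟩
  · rw [← cassini, cassini_add_two_mul hA, hA_one]
    ring
  · rw [← cassini, cassini_add_two_mul hB, hB_one]
    ring

theorem stmt_8 (x : ℝ) (A B : ℕ → ℝ)
    (hA0 : A 0 = x) (hA1 : A 1 = 2 * x)
    (hA2 : A 2 = x * (2 * x + 1)) (hA3 : A 3 = x * (4 * x + 1))
    (hB0 : B 0 = 1) (hB1 : B 1 = 1) (hB2 : B 2 = x + 1) (hB3 : B 3 = 2 * x + 1)
    (hA : ∀ j, A (j + 4) = (2 * x + 1) * A (j + 2) - x * A j)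
    (hB : ∀ j, B (j + 4) = (2 * x + 1) * B (j + 2) - x * B j) :
    ∀ j, 2 ≤ j →
      A (2 * j - 3) * A (2 * j + 1) - A (2 * j - 1) ^ 2 = x ^ j ∧
      B (2 * j - 3) * B (2 * j + 1) - B (2 * j - 1) ^ 2 = -x ^ (j - 1) :=
  stmt_8_general x A B hA1 hA3 hB1 hB3 hA hB
end

section
/- For every real number x and every j ≥ 0, one has A (2j)² − (2x−1)·A (2j)·B (2j) − x·B (2j)² = −x^(j+2). -/
/-!
The even convergents are the orbit of `(x, 1)` under `M = !![2x, x; 1, 1]`: the first step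
`(A 2, B 2) = M (A 0, B 0)` holds, and since `M` has trace `2x + 1` and determinant `x`, the
recurrence is the Cayley–Hamilton relation of `M`, which propagates the first-order system.
The quadratic form `Q v = det (v | M v)` satisfies `Q (M v) = det (M v | M (M v)) = det M * Q v`;
for this `M` it is `Q (a, b) = a² - (2x - 1) a b - x b²`, and `Q (x, 1) = -x²`.
-/

section DetForm

variable {R : Type*} [CommRing R] (p q r s : R)

/-- The quadratic form `v ↦ det (v | M v)` of `M = !![p, q; r, s]`. -/
def detForm (a b : R) : R := r * a ^ 2 + (s - p) * a * b - q * b ^ 2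

theorem detForm_mulVec (a b : R) :
    detForm p q r s (p * a + q * b) (r * a + s * b) = (p * s - q * r) * detForm p q r s a b := by
  unfold detForm
  ring

theorem orbit_of_trace_det_recurrence {a b : ℕ → R}
    (ha : ∀ n, a (n + 2) = (p + s) * a (n + 1) - (p * s - q * r) * a n)
    (hb : ∀ n, b (n + 2) = (p + s) * b (n + 1) - (p * s - q * r) * b n)
    (ha₁ : a 1 = p * a 0 + q * b 0) (hb₁ : b 1 = r * a 0 + s * b 0) (n : ℕ) :
    a (n + 1) = p * a n + q * b n ∧ b (n + 1) = r * a n + s * b n := by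
  induction n with
  | zero => exact ⟨ha₁, hb₁⟩
  | succ n ih =>
    obtain ⟨ha_succ, hb_succ⟩ := ih
    exact ⟨by linear_combination ha n + s * ha_succ - q * hb_succ,
      by linear_combination hb n + p * hb_succ - r * ha_succ⟩

theorem detForm_orbit {a b : ℕ → R}
    (hstep : ∀ n, a (n + 1) = p * a n + q * b n ∧ b (n + 1) = r * a n + s * b n) (n : ℕ) :
    detForm p q r s (a n) (b n) = (p * s - q * r) ^ n * detForm p q r s (a 0) (b 0) := by
  induction n with
  | zero => rw [pow_zero, one_mul]
  | succ n ih =>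
    rw [(hstep n).1, (hstep n).2, detForm_mulVec, ih, pow_succ, mul_comm _ (p * s - q * r),
      mul_assoc]

end DetForm

theorem stmt_9_general (x : ℝ) (A B : ℕ → ℝ)
    (hA0 : A 0 = x) (hA2 : A 2 = x * (2 * x + 1))
    (hB0 : B 0 = 1) (hB2 : B 2 = x + 1)
    (hA : ∀ j, A (j + 4) = (2 * x + 1) * A (j + 2) - x * A j)
    (hB : ∀ j, B (j + 4) = (2 * x + 1) * B (j + 2) - x * B j) :
    ∀ j, A (2 * j) ^ 2 - (2 * x - 1) * A (2 * j) * B (2 * j) - x * B (2 * j) ^ 2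
      = -x ^ (j + 2) := by
  intro j
  have even_rec (u : ℕ → ℝ) (hu : ∀ j, u (j + 4) = (2 * x + 1) * u (j + 2) - x * u j) (n : ℕ) :
      u (2 * (n + 2)) = (2 * x + 1) * u (2 * (n + 1)) - (2 * x * 1 - x * 1) * u (2 * n) := by
    rw [show 2 * (n + 2) = 2 * n + 4 by ring, show 2 * (n + 1) = 2 * n + 2 by ring, hu]
    ring
  have horbit := orbit_of_trace_det_recurrence (2 * x) x 1 1 (a := fun n ↦ A (2 * n))
    (b := fun n ↦ B (2 * n)) (even_rec A hA) (even_rec B hB)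
    (by simp only [hA2, hA0, hB0, mul_zero]; ring) (by simp only [hB2, hA0, hB0, mul_zero]; ring)
  have hform := detForm_orbit (2 * x) x 1 1 (a := fun n ↦ A (2 * n)) (b := fun n ↦ B (2 * n))
    horbit j
  simp only [detForm, mul_zero, hA0, hB0] at hform
  linear_combination hform

theorem stmt_9 (x : ℝ) (A B : ℕ → ℝ)
    (hA0 : A 0 = x) (hA1 : A 1 = 2 * x)
    (hA2 : A 2 = x * (2 * x + 1)) (hA3 : A 3 = x * (4 * x + 1))
    (hB0 : B 0 = 1) (hB1 : B 1 = 1) (hB2 : B 2 = x + 1) (hB3 : B 3 = 2 * x + 1)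
    (hA : ∀ j, A (j + 4) = (2 * x + 1) * A (j + 2) - x * A j)
    (hB : ∀ j, B (j + 4) = (2 * x + 1) * B (j + 2) - x * B j) :
    ∀ j, A (2 * j) ^ 2 - (2 * x - 1) * A (2 * j) * B (2 * j) - x * B (2 * j) ^ 2
      = -x ^ (j + 2) :=
  stmt_9_general x A B hA0 hA2 hB0 hB2 hA hB
end

section
/- For every real number x and every j ≥ 1, one has A (2j−1)² − (2x−1)·A (2j−1)·B (2j−1) − x·B (2j−1)² = x^j. -/
/-!
The odd-indexed pairs `(A (2j+1), B (2j+1))` evolve by the matrix `M = [[2x, x], [1, 1]]`: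
its characteristic polynomial `t² - (2x+1) t + x` is the given recurrence, and `M` matches the
first two odd terms. The binary quadratic form `Q(a, b) = a² - (2x-1) a b - x b²` satisfies
`Q ∘ M = det M • Q = x • Q`, and `Q (A 1) (B 1) = Q (2x) 1 = x`, so `Q` at step `j` is `x ^ j`.
-/

section OddTerms

variable {R : Type*} [CommRing R] {x : R} {A B : ℕ → R}

theorem odd_terms_step (hA1 : A 1 = 2 * x) (hA3 : A 3 = x * (4 * x + 1))
    (hB1 : B 1 = 1) (hB3 : B 3 = 2 * x + 1)
    (hA : ∀ j, A (j + 4) = (2 * x + 1) * A (j + 2) - x * A j)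
    (hB : ∀ j, B (j + 4) = (2 * x + 1) * B (j + 2) - x * B j) (j : ℕ) :
    A (2 * j + 3) = 2 * x * A (2 * j + 1) + x * B (2 * j + 1) ∧
      B (2 * j + 3) = A (2 * j + 1) + B (2 * j + 1) := by
  induction j with
  | zero =>
    simp only [Nat.mul_zero, Nat.zero_add]
    rw [hA3, hB3, hA1, hB1]
    constructor <;> ring
  | succ k ih =>
    obtain ⟨hAk, hBk⟩ := ih
    rw [show 2 * (k + 1) + 3 = 2 * k + 1 + 4 by ring, show 2 * (k + 1) + 1 = 2 * k + 3 by ring,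
      hA, hB, hAk, hBk]
    constructor <;> ring

theorem odd_terms_quadForm (hA1 : A 1 = 2 * x) (hA3 : A 3 = x * (4 * x + 1))
    (hB1 : B 1 = 1) (hB3 : B 3 = 2 * x + 1)
    (hA : ∀ j, A (j + 4) = (2 * x + 1) * A (j + 2) - x * A j)
    (hB : ∀ j, B (j + 4) = (2 * x + 1) * B (j + 2) - x * B j) (j : ℕ) :
    A (2 * j + 1) ^ 2 - (2 * x - 1) * A (2 * j + 1) * B (2 * j + 1)
      - x * B (2 * j + 1) ^ 2 = x ^ (j + 1) := by
  induction j with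
  | zero =>
    simp only [Nat.mul_zero, Nat.zero_add]
    rw [hA1, hB1]
    ring
  | succ k ih =>
    obtain ⟨hAk, hBk⟩ := odd_terms_step hA1 hA3 hB1 hB3 hA hB k
    rw [show 2 * (k + 1) + 1 = 2 * k + 3 by ring, hAk, hBk]
    linear_combination x * ih

end OddTerms

theorem stmt_10_general (x : ℝ) (A B : ℕ → ℝ)
    (hA1 : A 1 = 2 * x) (hA3 : A 3 = x * (4 * x + 1))
    (hB1 : B 1 = 1) (hB3 : B 3 = 2 * x + 1)
    (hA : ∀ j, A (j + 4) = (2 * x + 1) * A (j + 2) - x * A j)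
    (hB : ∀ j, B (j + 4) = (2 * x + 1) * B (j + 2) - x * B j) :
    ∀ j, 1 ≤ j →
      A (2 * j - 1) ^ 2 - (2 * x - 1) * A (2 * j - 1) * B (2 * j - 1)
        - x * B (2 * j - 1) ^ 2 = x ^ j := by
  intro j hj
  obtain ⟨k, rfl⟩ := Nat.exists_eq_add_of_le' hj
  rw [show 2 * (k + 1) - 1 = 2 * k + 1 by omega]
  exact odd_terms_quadForm hA1 hA3 hB1 hB3 hA hB k

theorem stmt_10 (x : ℝ) (A B : ℕ → ℝ)
    (hA0 : A 0 = x) (hA1 : A 1 = 2 * x)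
    (hA2 : A 2 = x * (2 * x + 1)) (hA3 : A 3 = x * (4 * x + 1))
    (hB0 : B 0 = 1) (hB1 : B 1 = 1) (hB2 : B 2 = x + 1) (hB3 : B 3 = 2 * x + 1)
    (hA : ∀ j, A (j + 4) = (2 * x + 1) * A (j + 2) - x * A j)
    (hB : ∀ j, B (j + 4) = (2 * x + 1) * B (j + 2) - x * B j) :
    ∀ j, 1 ≤ j →
      A (2 * j - 1) ^ 2 - (2 * x - 1) * A (2 * j - 1) * B (2 * j - 1)
        - x * B (2 * j - 1) ^ 2 = x ^ j :=
  stmt_10_general x A B hA1 hA3 hB1 hB3 hA hB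
end

section
/- Let x > 0 be a real number and set P(x,z) = z² − (2x−1)·z − x. Then B j > 0 for every j ≥ 0, and for every k ≥ 1 the odd convergent F_k(x) = A (2k−1) / B (2k−1) satisfies P(x, F_k(x)) = x^k / B (2k−1)². -/
/-!
Let `φ` be a root of `P(x, ·)`. Then `convergentNorm x a b = b² P(x, a / b)` is the norm of
`a - φ b` in `ℝ[φ]`. The recurrences say that the index shift `j ↦ j + 2` acts on
`A j - φ B j` as multiplication by `2x - φ`, i.e. `(a, b) ↦ (2xa + xb, a + b)`, which
multiplies the norm by `N(2x - φ) = x` and visibly preserves positivity. As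
`A 1 - φ B 1 = 2x - φ`, the odd convergents satisfy `A (2k-1) - φ B (2k-1) = (2x - φ)^k`,
of norm `x^k`.
-/

def convergentNorm (x a b : ℝ) : ℝ := a ^ 2 - (2 * x - 1) * a * b - x * b ^ 2

lemma convergentNorm_step (x a b : ℝ) :
    convergentNorm x (2 * x * a + x * b) (a + b) = x * convergentNorm x a b := by
  unfold convergentNorm
  ring

lemma convergentNorm_div_sq (x a b : ℝ) (hb : b ≠ 0) :
    convergentNorm x a b / b ^ 2 = (a / b) ^ 2 - (2 * x - 1) * (a / b) - x := by
  unfold convergentNorm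
  field_simp

section Convergents

variable {x : ℝ} {A B : ℕ → ℝ}

lemma convergents_add_two
    (hA0 : A 0 = x) (hA1 : A 1 = 2 * x) (hA2 : A 2 = x * (2 * x + 1)) (hA3 : A 3 = x * (4 * x + 1))
    (hB0 : B 0 = 1) (hB1 : B 1 = 1) (hB2 : B 2 = x + 1) (hB3 : B 3 = 2 * x + 1)
    (hA : ∀ j, A (j + 4) = (2 * x + 1) * A (j + 2) - x * A j)
    (hB : ∀ j, B (j + 4) = (2 * x + 1) * B (j + 2) - x * B j) (j : ℕ) :
    A (j + 2) = 2 * x * A j + x * B j ∧ B (j + 2) = A j + B j := by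
  induction j using Nat.twoStepInduction with
  | zero => rw [hA0, hA2, hB0, hB2]; exact ⟨by ring, by ring⟩
  | one => rw [hA1, hA3, hB1, hB3]; exact ⟨by ring, by ring⟩
  | more j ih _ =>
    obtain ⟨hAj, hBj⟩ := ih
    constructor
    · linear_combination hA j + hAj - x * hBj
    · linear_combination hB j + 2 * x * hBj - hAj

lemma convergents_pos (hx : 0 < x)
    (hA0 : A 0 = x) (hA1 : A 1 = 2 * x) (hB0 : B 0 = 1) (hB1 : B 1 = 1)
    (hstep : ∀ j, A (j + 2) = 2 * x * A j + x * B j ∧ B (j + 2) = A j + B j) (j : ℕ) :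
    0 < A j ∧ 0 < B j := by
  induction j using Nat.twoStepInduction with
  | zero => rw [hA0, hB0]; exact ⟨hx, one_pos⟩
  | one => rw [hA1, hB1]; exact ⟨by positivity, one_pos⟩
  | more j ih _ =>
    obtain ⟨hAj, hBj⟩ := ih
    rw [(hstep j).1, (hstep j).2]
    exact ⟨by positivity, by positivity⟩

lemma convergentNorm_odd (hA1 : A 1 = 2 * x) (hB1 : B 1 = 1)
    (hstep : ∀ j, A (j + 2) = 2 * x * A j + x * B j ∧ B (j + 2) = A j + B j) (m : ℕ) :
    convergentNorm x (A (2 * m + 1)) (B (2 * m + 1)) = x ^ (m + 1) := by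
  induction m with
  | zero => rw [hA1, hB1]; unfold convergentNorm; ring
  | succ m ih =>
    rw [show 2 * (m + 1) + 1 = 2 * m + 1 + 2 by ring, (hstep _).1, (hstep _).2,
      convergentNorm_step, ih, pow_succ' x (m + 1)]

end Convergents

theorem stmt_11 (x : ℝ) (hx : 0 < x) (A B : ℕ → ℝ)
    (hA0 : A 0 = x) (hA1 : A 1 = 2 * x)
    (hA2 : A 2 = x * (2 * x + 1)) (hA3 : A 3 = x * (4 * x + 1))
    (hB0 : B 0 = 1) (hB1 : B 1 = 1) (hB2 : B 2 = x + 1) (hB3 : B 3 = 2 * x + 1)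
    (hA : ∀ j, A (j + 4) = (2 * x + 1) * A (j + 2) - x * A j)
    (hB : ∀ j, B (j + 4) = (2 * x + 1) * B (j + 2) - x * B j) :
    (∀ j, 0 < B j) ∧
    (∀ k, 1 ≤ k →
      (A (2 * k - 1) / B (2 * k - 1)) ^ 2
        - (2 * x - 1) * (A (2 * k - 1) / B (2 * k - 1)) - x
      = x ^ k / B (2 * k - 1) ^ 2) := by
  have hstep := convergents_add_two hA0 hA1 hA2 hA3 hB0 hB1 hB2 hB3 hA hB
  have hpos := convergents_pos hx hA0 hA1 hB0 hB1 hstep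
  refine ⟨fun j => (hpos j).2, fun k hk => ?_⟩
  obtain ⟨m, rfl⟩ : ∃ m, k = m + 1 := ⟨k - 1, by omega⟩
  rw [show 2 * (m + 1) - 1 = 2 * m + 1 by omega,
    ← convergentNorm_div_sq x _ _ (hpos _).2.ne', convergentNorm_odd hA1 hB1 hstep]
end

section
/- Let x > 0 be a real number and set P(x,z) = z² − (2x−1)·z − x. Then B j > 0 for every j ≥ 0, and for every k ≥ 0 the even convergent F*_k(x) = A (2k) / B (2k) satisfies P(x, F*_k(x)) = −x^(k+2) / B (2k)². -/
/-!
The pair `(A j, B j)` advances by two steps through the matrix `M = [[2x, x], [1, 1]]`, whose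
characteristic polynomial `T² - (2x+1) T + x` is the given recurrence (Cayley–Hamilton). `M` has
positive entries, so `B j > 0`, and the binary form `a² - (2x-1) a b - x b²` is multiplied by
`det M = x` under `M`; starting from `-x²` at `(A 0, B 0) = (x, 1)`, it equals `-x^(k+2)` at
`(A (2k), B (2k))`. Dividing by `B (2k)²` gives the claim.
-/

section FirstOrderSystem

variable {R : Type*} [CommRing R] (a b c d : R) (A B : ℕ → R)

theorem twoStep_system_of_recurrence
    (hA : ∀ j, A (j + 4) = (a + d) * A (j + 2) - (a * d - b * c) * A j)
    (hB : ∀ j, B (j + 4) = (a + d) * B (j + 2) - (a * d - b * c) * B j)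
    (h0 : A 2 = a * A 0 + b * B 0 ∧ B 2 = c * A 0 + d * B 0)
    (h1 : A 3 = a * A 1 + b * B 1 ∧ B 3 = c * A 1 + d * B 1) :
    ∀ j, A (j + 2) = a * A j + b * B j ∧ B (j + 2) = c * A j + d * B j := by
  intro j
  induction j using Nat.twoStepInduction with
  | zero => exact h0
  | one => exact h1
  | more n ih _ =>
    obtain ⟨ihA, ihB⟩ := ih
    exact ⟨by rw [hA n, ihA, ihB]; ring, by rw [hB n, ihA, ihB]; ring⟩

end FirstOrderSystem

theorem form_step_eq_mul {R : Type*} [CommRing R] (x a b : R) :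
    (2 * x * a + x * b) ^ 2 - (2 * x - 1) * (2 * x * a + x * b) * (a + b) - x * (a + b) ^ 2
      = x * (a ^ 2 - (2 * x - 1) * a * b - x * b ^ 2) := by
  ring

section Convergents

variable {x : ℝ} {A B : ℕ → ℝ}
  (hsys : ∀ j, A (j + 2) = 2 * x * A j + x * B j ∧ B (j + 2) = A j + B j)
include hsys

theorem pos_of_system (hx : 0 < x) (h0 : 0 < A 0 ∧ 0 < B 0) (h1 : 0 < A 1 ∧ 0 < B 1) :
    ∀ j, 0 < A j ∧ 0 < B j := by
  intro j
  induction j using Nat.twoStepInduction with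
  | zero => exact h0
  | one => exact h1
  | more n ih _ =>
    obtain ⟨pA, pB⟩ := ih
    rw [(hsys n).1, (hsys n).2]
    constructor <;> positivity

theorem form_even_eq (hA0 : A 0 = x) (hB0 : B 0 = 1) (k : ℕ) :
    A (2 * k) ^ 2 - (2 * x - 1) * A (2 * k) * B (2 * k) - x * B (2 * k) ^ 2 = -x ^ (k + 2) := by
  induction k with
  | zero => rw [hA0, hB0]; ring
  | succ n ih =>
    rw [Nat.mul_succ, (hsys (2 * n)).1, (hsys (2 * n)).2, form_step_eq_mul, ih]
    ring

end Convergents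

theorem stmt_12 (x : ℝ) (hx : 0 < x) (A B : ℕ → ℝ)
    (hA0 : A 0 = x) (hA1 : A 1 = 2 * x)
    (hA2 : A 2 = x * (2 * x + 1)) (hA3 : A 3 = x * (4 * x + 1))
    (hB0 : B 0 = 1) (hB1 : B 1 = 1) (hB2 : B 2 = x + 1) (hB3 : B 3 = 2 * x + 1)
    (hA : ∀ j, A (j + 4) = (2 * x + 1) * A (j + 2) - x * A j)
    (hB : ∀ j, B (j + 4) = (2 * x + 1) * B (j + 2) - x * B j) :
    (∀ j, 0 < B j) ∧
    (∀ k, (A (2 * k) / B (2 * k)) ^ 2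
        - (2 * x - 1) * (A (2 * k) / B (2 * k)) - x
      = -x ^ (k + 2) / B (2 * k) ^ 2) := by
  have hsys : ∀ j, A (j + 2) = 2 * x * A j + x * B j ∧ B (j + 2) = 1 * A j + 1 * B j := by
    refine twoStep_system_of_recurrence _ _ _ _ A B ?_ ?_ ?_ ?_
    · intro j; rw [hA j]; ring
    · intro j; rw [hB j]; ring
    · rw [hA2, hB2, hA0, hB0]; constructor <;> ring
    · rw [hA3, hB3, hA1, hB1]; constructor <;> ring
  simp only [one_mul] at hsys
  have hpos := pos_of_system hsys hx (by rw [hA0, hB0]; exact ⟨hx, one_pos⟩)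
    (by rw [hA1, hB1]; exact ⟨by positivity, one_pos⟩)
  refine ⟨fun j => (hpos j).2, fun k => ?_⟩
  have hB2k : B (2 * k) ≠ 0 := (hpos (2 * k)).2.ne'
  field_simp
  linear_combination form_even_eq hsys hA0 hB0 k
end

section
/- Let x be a positive integer, regarded as a real number. Then the sequence of odd convergents k ↦ A (2k+1) / B (2k+1) converges (as k → ∞) to z₁ = (2x − 1 + √(4x² + 1))/2, the positive root of the quadratic P(x,z) = z² − (2x−1)·z − x; moreover z₁ is irrational. -/
/-!
Along odd indices both recurrences become `u (k + 2) = (r + s) u (k + 1) - r s u k`, where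
`r, s = (2x + 1 ± √(4x² + 1)) / 2` are the roots of `t² - (2x + 1) t + x`. Solving them gives
`(r - s) B (2k + 1) = rᵏ⁺¹ - sᵏ⁺¹` and `A (2k + 1) - (r - 1) B (2k + 1) = sᵏ⁺¹`, so the odd
convergents differ from `z₁ = r - 1` by `(r - s) sᵏ⁺¹ / (rᵏ⁺¹ - sᵏ⁺¹)`, which tends to `0` as
`0 < s < r`.
Irrationality holds because `4n² + 1` lies strictly between `(2n)²` and `(2n + 1)²`.
-/

open Filter Topology

section CommRing

variable {R : Type*} [CommRing R]

theorem eq_mul_pow_add_mul_pow_of_recurrence {u : ℕ → R} {r s a b : R}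
    (hu : ∀ k, u (k + 2) = (r + s) * u (k + 1) - r * s * u k)
    (h0 : u 0 = a + b) (h1 : u 1 = a * r + b * s) (k : ℕ) :
    u k = a * r ^ k + b * s ^ k := by
  induction k using Nat.twoStepInduction with
  | zero => simpa using h0
  | one => simpa using h1
  | more k ih₀ ih₁ => rw [hu, ih₀, ih₁]; ring

variable {x r s : R} (hsum : r + s = 2 * x + 1) (hprod : r * s = x)
include hsum hprod

theorem odd_subsequence_recurrence {w : ℕ → R}
    (hw : ∀ j, w (j + 4) = (2 * x + 1) * w (j + 2) - x * w j) (k : ℕ) :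
    w (2 * (k + 2) + 1) = (r + s) * w (2 * (k + 1) + 1) - r * s * w (2 * k + 1) := by
  rw [hsum, hprod, show 2 * (k + 2) + 1 = 2 * k + 1 + 4 by ring,
    show 2 * (k + 1) + 1 = 2 * k + 1 + 2 by ring, hw]

theorem sub_mul_odd_denominator {B : ℕ → R} (hB1 : B 1 = 1) (hB3 : B 3 = 2 * x + 1)
    (hB : ∀ j, B (j + 4) = (2 * x + 1) * B (j + 2) - x * B j) (k : ℕ) :
    (r - s) * B (2 * k + 1) = r ^ (k + 1) - s ^ (k + 1) := by
  have := eq_mul_pow_add_mul_pow_of_recurrence (u := fun k => (r - s) * B (2 * k + 1))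
    (r := r) (s := s) (a := r) (b := -s)
    (fun k => by rw [odd_subsequence_recurrence hsum hprod hB]; ring)
    (by simp only [mul_zero, zero_add, hB1, mul_one]; ring)
    (by simp only [mul_one, Nat.reduceAdd, hB3, ← hsum]; ring) k
  rw [this]; ring

theorem odd_numerator_sub_mul_denominator {A B : ℕ → R} (hA1 : A 1 = 2 * x)
    (hA3 : A 3 = x * (4 * x + 1)) (hB1 : B 1 = 1) (hB3 : B 3 = 2 * x + 1)
    (hA : ∀ j, A (j + 4) = (2 * x + 1) * A (j + 2) - x * A j)
    (hB : ∀ j, B (j + 4) = (2 * x + 1) * B (j + 2) - x * B j) (k : ℕ) :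
    A (2 * k + 1) - (r - 1) * B (2 * k + 1) = s ^ (k + 1) := by
  have := eq_mul_pow_add_mul_pow_of_recurrence
    (u := fun k => A (2 * k + 1) - (r - 1) * B (2 * k + 1)) (r := r) (s := s) (a := 0) (b := s)
    (fun k => by
      rw [odd_subsequence_recurrence hsum hprod hA, odd_subsequence_recurrence hsum hprod hB]; ring)
    (by simp only [mul_zero, zero_add, hA1, hB1, mul_one]; linear_combination -hsum)
    (by
      simp only [mul_one, Nat.reduceAdd, hA3, hB3, zero_mul, zero_add]
      linear_combination hprod + (-s - 2 * x - 1) * hsum) k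
  rw [this]; ring

end CommRing

theorem tendsto_pow_div_pow_sub_pow_atTop {r s : ℝ} (hs : 0 ≤ s) (hsr : s < r) :
    Tendsto (fun k : ℕ => s ^ k / (r ^ k - s ^ k)) atTop (𝓝 0) := by
  have hr : 0 < r := hs.trans_lt hsr
  have hq : Tendsto (fun k : ℕ => (s / r) ^ k) atTop (𝓝 0) :=
    tendsto_pow_atTop_nhds_zero_of_lt_one (div_nonneg hs hr.le) ((div_lt_one hr).2 hsr)
  have := hq.div (tendsto_const_nhds.sub hq) (by norm_num : (1 : ℝ) - 0 ≠ 0)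
  rw [zero_div] at this
  refine this.congr fun k => ?_
  have : r ^ k ≠ 0 := pow_ne_zero _ hr.ne'
  simp only [Pi.div_apply, div_pow]
  field_simp

theorem tendsto_odd_convergents {x r s : ℝ} (hsum : r + s = 2 * x + 1) (hprod : r * s = x)
    (hs : 0 ≤ s) (hsr : s < r) {A B : ℕ → ℝ} (hA1 : A 1 = 2 * x)
    (hA3 : A 3 = x * (4 * x + 1)) (hB1 : B 1 = 1) (hB3 : B 3 = 2 * x + 1)
    (hA : ∀ j, A (j + 4) = (2 * x + 1) * A (j + 2) - x * A j)
    (hB : ∀ j, B (j + 4) = (2 * x + 1) * B (j + 2) - x * B j) :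
    Tendsto (fun k => A (2 * k + 1) / B (2 * k + 1)) atTop (𝓝 (r - 1)) := by
  have hconv : ∀ k, A (2 * k + 1) / B (2 * k + 1) =
      r - 1 + (r - s) * (s ^ (k + 1) / (r ^ (k + 1) - s ^ (k + 1))) := fun k => by
    have hden := sub_mul_odd_denominator hsum hprod hB1 hB3 hB k
    have hnum := odd_numerator_sub_mul_denominator hsum hprod hA1 hA3 hB1 hB3 hA hB k
    have hpow : s ^ (k + 1) < r ^ (k + 1) := pow_lt_pow_left₀ hsr hs k.succ_ne_zero
    have hB0 : B (2 * k + 1) ≠ 0 := by rintro h; rw [h] at hden; linarith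
    have hrs : r - s ≠ 0 := sub_ne_zero.2 hsr.ne'
    rw [← hden, show A (2 * k + 1) = (r - 1) * B (2 * k + 1) + s ^ (k + 1) by
      linear_combination hnum]
    field_simp
  have hlim := ((tendsto_pow_div_pow_sub_pow_atTop hs hsr).comp
    (tendsto_add_atTop_nat 1)).const_mul (r - s) |>.const_add (r - 1)
  rw [mul_zero, add_zero] at hlim
  exact hlim.congr fun k => (hconv k).symm

theorem irrational_sqrt_four_mul_sq_add_one {n : ℕ} (hn : n ≠ 0) :
    Irrational √(4 * (n : ℝ) ^ 2 + 1) := by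
  have hsq : ¬IsSquare (4 * n ^ 2 + 1) := by
    rintro ⟨m, hm⟩
    have h1 : 2 * n < m := by nlinarith
    have h2 : m < 2 * n + 1 := by nlinarith [Nat.pos_of_ne_zero hn]
    omega
  exact_mod_cast irrational_sqrt_natCast_iff.2 hsq

theorem stmt_13_general (n : ℕ) (hn : 0 < n) (x : ℝ) (hxn : x = (n : ℝ)) (A B : ℕ → ℝ)
    (hA1 : A 1 = 2 * x) (hA3 : A 3 = x * (4 * x + 1))
    (hB1 : B 1 = 1) (hB3 : B 3 = 2 * x + 1)
    (hA : ∀ j, A (j + 4) = (2 * x + 1) * A (j + 2) - x * A j)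
    (hB : ∀ j, B (j + 4) = (2 * x + 1) * B (j + 2) - x * B j) :
    Filter.Tendsto (fun k => A (2 * k + 1) / B (2 * k + 1)) Filter.atTop
      (nhds ((2 * x - 1 + Real.sqrt (4 * x ^ 2 + 1)) / 2)) ∧
    ((2 * x - 1 + Real.sqrt (4 * x ^ 2 + 1)) / 2) ^ 2
      - (2 * x - 1) * ((2 * x - 1 + Real.sqrt (4 * x ^ 2 + 1)) / 2) - x = 0 ∧
    0 < (2 * x - 1 + Real.sqrt (4 * x ^ 2 + 1)) / 2 ∧
    Irrational ((2 * x - 1 + Real.sqrt (4 * x ^ 2 + 1)) / 2) := by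
  have hx : 0 < x := hxn ▸ Nat.cast_pos.2 hn
  set D := √(4 * x ^ 2 + 1)
  have hD2 : D ^ 2 = 4 * x ^ 2 + 1 := Real.sq_sqrt (by positivity)
  have hD1 : 1 ≤ D := Real.one_le_sqrt.2 (by nlinarith)
  have hDlt : D < 2 * x + 1 := by nlinarith
  refine ⟨?_, by linear_combination hD2 / 4, by linarith, ?_⟩
  · rw [show (2 * x - 1 + D) / 2 = (2 * x + 1 + D) / 2 - 1 by ring]
    exact tendsto_odd_convergents (r := (2 * x + 1 + D) / 2) (s := (2 * x + 1 - D) / 2)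
      (by ring) (by linear_combination -hD2 / 4) (by linarith) (by linarith) hA1 hA3 hB1 hB3 hA hB
  · convert ((irrational_sqrt_four_mul_sq_add_one hn.ne').intCast_add (2 * n - 1)).div_natCast
      two_ne_zero using 1
    simp only [D, hxn]
    push_cast
    ring

theorem stmt_13 (n : ℕ) (hn : 0 < n) (x : ℝ) (hxn : x = (n : ℝ)) (A B : ℕ → ℝ)
    (hA0 : A 0 = x) (hA1 : A 1 = 2 * x)
    (hA2 : A 2 = x * (2 * x + 1)) (hA3 : A 3 = x * (4 * x + 1))
    (hB0 : B 0 = 1) (hB1 : B 1 = 1) (hB2 : B 2 = x + 1) (hB3 : B 3 = 2 * x + 1)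
    (hA : ∀ j, A (j + 4) = (2 * x + 1) * A (j + 2) - x * A j)
    (hB : ∀ j, B (j + 4) = (2 * x + 1) * B (j + 2) - x * B j) :
    Filter.Tendsto (fun k => A (2 * k + 1) / B (2 * k + 1)) Filter.atTop
      (nhds ((2 * x - 1 + Real.sqrt (4 * x ^ 2 + 1)) / 2)) ∧
    ((2 * x - 1 + Real.sqrt (4 * x ^ 2 + 1)) / 2) ^ 2
      - (2 * x - 1) * ((2 * x - 1 + Real.sqrt (4 * x ^ 2 + 1)) / 2) - x = 0 ∧
    0 < (2 * x - 1 + Real.sqrt (4 * x ^ 2 + 1)) / 2 ∧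
    Irrational ((2 * x - 1 + Real.sqrt (4 * x ^ 2 + 1)) / 2) :=
  stmt_13_general n hn x hxn A B hA1 hA3 hB1 hB3 hA hB
end

section
/- Let x be a positive integer, regarded as a real number. Then the sequence of even convergents k ↦ A (2k) / B (2k) converges (as k → ∞) to z₁ = (2x − 1 + √(4x² + 1))/2, the positive root of the quadratic P(x,z) = z² − (2x−1)·z − x. -/
/-!
The even convergents `u k = A (2k)`, `v k = B (2k)` both satisfy the second-order recurrence
`w (k+2) = (2x+1) w (k+1) - x w k`, whose characteristic roots are `r = z₁ + 1` and `s = 2x - z₁`.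
Since `|s| < r`, both sequences grow like a constant times `r ^ k`, and the ratio of the two
constants, `(A 2 - s A 0) / (B 2 - s B 0)`, simplifies to `z₁` using `P(x, z₁) = 0`.
-/

open Filter Topology

section TwoTermRecurrence

theorem mul_sub_eq_of_recurrence {R : Type*} [CommRing R] {u : ℕ → R} {r s : R}
    (hu : ∀ k, u (k + 2) = (r + s) * u (k + 1) - r * s * u k) (k : ℕ) :
    u k * (r - s) = (u 1 - s * u 0) * r ^ k - (u 1 - r * u 0) * s ^ k := by
  induction k using Nat.twoStepInduction with
  | zero => ring
  | one => ring
  | more k ih₀ ih₁ =>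
    rw [hu, pow_succ r (k + 1), pow_succ s (k + 1)]
    linear_combination (r + s) * ih₁ - r * s * ih₀

variable {𝕜 : Type*} [NormedField 𝕜] {u v : ℕ → 𝕜} {r s : 𝕜}

theorem tendsto_div_pow_of_recurrence
    (hu : ∀ k, u (k + 2) = (r + s) * u (k + 1) - r * s * u k) (hsr : ‖s‖ < ‖r‖) :
    Tendsto (fun k => u k / r ^ k) atTop (𝓝 ((u 1 - s * u 0) / (r - s))) := by
  have hr : r ≠ 0 := norm_pos_iff.mp ((norm_nonneg s).trans_lt hsr)
  have hrs : r - s ≠ 0 := sub_ne_zero.mpr (by rintro rfl; exact hsr.false)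
  have hq : Tendsto (fun k => (s / r) ^ k) atTop (𝓝 0) :=
    tendsto_pow_atTop_nhds_zero_of_norm_lt_one <| by
      rw [norm_div, div_lt_one (norm_pos_iff.mpr hr)]; exact hsr
  have hlim := (tendsto_const_nhds (x := u 1 - s * u 0)).sub
    ((tendsto_const_nhds (x := u 1 - r * u 0)).mul hq) |>.div_const (r - s)
  rw [mul_zero, sub_zero] at hlim
  refine hlim.congr fun k => ?_
  rw [eq_div_iff (pow_ne_zero k hr), div_mul_eq_mul_div, div_eq_iff hrs, div_pow,
    mul_sub_eq_of_recurrence hu k]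
  field_simp

theorem tendsto_div_of_recurrence
    (hu : ∀ k, u (k + 2) = (r + s) * u (k + 1) - r * s * u k)
    (hv : ∀ k, v (k + 2) = (r + s) * v (k + 1) - r * s * v k)
    (hsr : ‖s‖ < ‖r‖) (hv₁ : v 1 - s * v 0 ≠ 0) :
    Tendsto (fun k => u k / v k) atTop (𝓝 ((u 1 - s * u 0) / (v 1 - s * v 0))) := by
  have hr : r ≠ 0 := norm_pos_iff.mp ((norm_nonneg s).trans_lt hsr)
  have hrs : r - s ≠ 0 := sub_ne_zero.mpr (by rintro rfl; exact hsr.false)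
  have hlim := (tendsto_div_pow_of_recurrence hu hsr).div
    (tendsto_div_pow_of_recurrence hv hsr) (div_ne_zero hv₁ hrs)
  rw [div_div_div_cancel_right₀ hrs] at hlim
  exact hlim.congr fun k => div_div_div_cancel_right₀ (pow_ne_zero k hr) _ _

end TwoTermRecurrence

theorem even_subsequence_recurrence {R : Type*} [Ring R] {w : ℕ → R} {p q : R}
    (hw : ∀ j, w (j + 4) = p * w (j + 2) - q * w j) (k : ℕ) :
    w (2 * (k + 2)) = p * w (2 * (k + 1)) - q * w (2 * k) := by
  rw [show 2 * (k + 2) = 2 * k + 4 by ring, show 2 * (k + 1) = 2 * k + 2 by ring]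
  exact hw (2 * k)

theorem stmt_14_general (n : ℕ) (hn : 0 < n) (x : ℝ) (hxn : x = (n : ℝ)) (A B : ℕ → ℝ)
    (hA0 : A 0 = x)
    (hA2 : A 2 = x * (2 * x + 1))
    (hB0 : B 0 = 1) (hB2 : B 2 = x + 1)
    (hA : ∀ j, A (j + 4) = (2 * x + 1) * A (j + 2) - x * A j)
    (hB : ∀ j, B (j + 4) = (2 * x + 1) * B (j + 2) - x * B j) :
    Filter.Tendsto (fun k => A (2 * k) / B (2 * k)) Filter.atTop
      (nhds ((2 * x - 1 + Real.sqrt (4 * x ^ 2 + 1)) / 2)) ∧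
    ((2 * x - 1 + Real.sqrt (4 * x ^ 2 + 1)) / 2) ^ 2
      - (2 * x - 1) * ((2 * x - 1 + Real.sqrt (4 * x ^ 2 + 1)) / 2) - x = 0 ∧
    0 < (2 * x - 1 + Real.sqrt (4 * x ^ 2 + 1)) / 2 := by
  have hx : 1 ≤ x := by rw [hxn]; exact_mod_cast hn
  set d := Real.sqrt (4 * x ^ 2 + 1)
  have hd : d ^ 2 = 4 * x ^ 2 + 1 := Real.sq_sqrt (by positivity)
  have hd_pos : 0 < d := Real.sqrt_pos.mpr (by positivity)
  set z := (2 * x - 1 + d) / 2 with hz_def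
  have hz : z ^ 2 - (2 * x - 1) * z - x = 0 := by linear_combination hd / 4
  have hsum : (z + 1) + (2 * x - z) = 2 * x + 1 := by ring
  have hprod : (z + 1) * (2 * x - z) = x := by linear_combination -hz
  have hrec {w : ℕ → ℝ} (hw : ∀ j, w (j + 4) = (2 * x + 1) * w (j + 2) - x * w j) (k : ℕ) :
      w (2 * (k + 2)) = ((z + 1) + (2 * x - z)) * w (2 * (k + 1))
        - (z + 1) * (2 * x - z) * w (2 * k) := by
    rw [hsum, hprod]; exact even_subsequence_recurrence hw k
  have hroots : ‖2 * x - z‖ < ‖z + 1‖ := by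
    rw [Real.norm_eq_abs, Real.norm_eq_abs, abs_lt, abs_of_pos (by linarith)]
    constructor <;> linarith
  have hden : x + 1 - (2 * x - z) ≠ 0 := by linarith
  refine ⟨?_, hz, by linarith⟩
  convert tendsto_div_of_recurrence (u := fun k => A (2 * k)) (v := fun k => B (2 * k))
    (hrec hA) (hrec hB) hroots (by simpa [hB0, hB2] using hden) using 2
  simp only [mul_zero, mul_one, hA0, hA2, hB0, hB2]
  rw [eq_div_iff hden]
  linear_combination hz

theorem stmt_14 (n : ℕ) (hn : 0 < n) (x : ℝ) (hxn : x = (n : ℝ)) (A B : ℕ → ℝ)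
    (hA0 : A 0 = x) (hA1 : A 1 = 2 * x)
    (hA2 : A 2 = x * (2 * x + 1)) (hA3 : A 3 = x * (4 * x + 1))
    (hB0 : B 0 = 1) (hB1 : B 1 = 1) (hB2 : B 2 = x + 1) (hB3 : B 3 = 2 * x + 1)
    (hA : ∀ j, A (j + 4) = (2 * x + 1) * A (j + 2) - x * A j)
    (hB : ∀ j, B (j + 4) = (2 * x + 1) * B (j + 2) - x * B j) :
    Filter.Tendsto (fun k => A (2 * k) / B (2 * k)) Filter.atTop
      (nhds ((2 * x - 1 + Real.sqrt (4 * x ^ 2 + 1)) / 2)) ∧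
    ((2 * x - 1 + Real.sqrt (4 * x ^ 2 + 1)) / 2) ^ 2
      - (2 * x - 1) * ((2 * x - 1 + Real.sqrt (4 * x ^ 2 + 1)) / 2) - x = 0 ∧
    0 < (2 * x - 1 + Real.sqrt (4 * x ^ 2 + 1)) / 2 :=
  stmt_14_general n hn x hxn A B hA0 hA2 hB0 hB2 hA hB
end

section
/- For all real numbers x and s the following relations hold: A (2j+1) = (s+1)·A (2j) − A (2j−2) for all j ≥ 1; x·B (2j+1) = s·A (2j) for all j ≥ 0; s·B (2j) = B (2j+1) − x·B (2j−1) for all j ≥ 1; and x·B (2j) = A (2j) − x·A (2j−2) for all j ≥ 1. -/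
/-!
Since the recurrences for `A` and `B` step by two, the even- and odd-indexed subsequences of `A`
and `B` (and their shifts) all solve the same second-order recurrence
`u (k + 2) = ((s + 1) x + 1) u (k + 1) - x u k`. Its solutions form a module in which a solution is
determined by its first two terms, so each identity, being linear in such subsequences, only has to
be checked at `k = 0` and `k = 1`.
-/

namespace LinearRecurrence

variable {R : Type*} [CommRing R]

def ofOrderTwo (p q : R) : LinearRecurrence R := ⟨2, ![-q, p]⟩

theorem mem_solSpace_ofOrderTwo_iff {p q : R} {u : ℕ → R} :
    u ∈ (ofOrderTwo p q).solSpace ↔ ∀ n, u (n + 2) = p * u (n + 1) - q * u n := by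
  refine forall_congr' fun n => ?_
  change u (n + 2) = ∑ i : Fin 2, ![-q, p] i * u (n + i) ↔ _
  simp [Fin.sum_univ_two, sub_eq_neg_add]

theorem eq_of_mem_solSpace_ofOrderTwo {p q : R} {u v : ℕ → R}
    (hu : u ∈ (ofOrderTwo p q).solSpace) (hv : v ∈ (ofOrderTwo p q).solSpace)
    (h0 : u 0 = v 0) (h1 : u 1 = v 1) (n : ℕ) : u n = v n := by
  refine congrFun (((ofOrderTwo p q).eq_iff_eqOn_range_order u v hu hv).2 ?_) n
  intro k hk
  obtain _ | _ | k := k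
  · exact h0
  · exact h1
  · simp [ofOrderTwo] at hk

theorem comp_two_mul_add_mem_solSpace_ofOrderTwo {p q : R} {u : ℕ → R}
    (h : ∀ j, u (j + 4) = p * u (j + 2) - q * u j) (r : ℕ) :
    (fun k => u (2 * k + r)) ∈ (ofOrderTwo p q).solSpace :=
  mem_solSpace_ofOrderTwo_iff.2 fun n => by
    convert h (2 * n + r) using 2 <;> ring_nf

end LinearRecurrence

open LinearRecurrence

section Convergents

variable {R : Type*} [CommRing R] {x s : R} {A B : ℕ → R}

theorem convergent_num_odd_step (hA0 : A 0 = x) (hA1 : A 1 = x * (s + 1))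
    (hA2 : A 2 = x * ((s + 1) * x + 1)) (hA3 : A 3 = x * ((s + 1) ^ 2 * x + s))
    (hA : ∀ j, A (j + 4) = ((s + 1) * x + 1) * A (j + 2) - x * A j) (k : ℕ) :
    A (2 * k + 3) = (s + 1) * A (2 * k + 2) - A (2 * k) := by
  have hsol := comp_two_mul_add_mem_solSpace_ofOrderTwo hA
  have hA4 : A 4 = _ := hA 0
  have hA5 : A 5 = _ := hA 1
  simpa using eq_of_mem_solSpace_ofOrderTwo (hsol 3)
    (Submodule.sub_mem _ (Submodule.smul_mem _ (s + 1) (hsol 2)) (hsol 0))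
    (by simp [hA3, hA2, hA0]; ring) (by simp [hA5, hA4, hA3, hA2, hA1, hA0]; ring) k

theorem convergent_den_odd_eq_num (hA0 : A 0 = x) (hA2 : A 2 = x * ((s + 1) * x + 1))
    (hB1 : B 1 = s) (hB3 : B 3 = s * ((s + 1) * x + 1))
    (hA : ∀ j, A (j + 4) = ((s + 1) * x + 1) * A (j + 2) - x * A j)
    (hB : ∀ j, B (j + 4) = ((s + 1) * x + 1) * B (j + 2) - x * B j) (k : ℕ) :
    x * B (2 * k + 1) = s * A (2 * k) := by
  simpa using eq_of_mem_solSpace_ofOrderTwo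
    (Submodule.smul_mem _ x (comp_two_mul_add_mem_solSpace_ofOrderTwo hB 1))
    (Submodule.smul_mem _ s (comp_two_mul_add_mem_solSpace_ofOrderTwo hA 0))
    (by simp [hB1, hA0]; ring) (by simp [hB3, hA2]; ring) k

theorem convergent_den_even_step (hB0 : B 0 = 1) (hB1 : B 1 = s)
    (hB2 : B 2 = s * x + 1) (hB3 : B 3 = s * ((s + 1) * x + 1))
    (hB : ∀ j, B (j + 4) = ((s + 1) * x + 1) * B (j + 2) - x * B j) (k : ℕ) :
    s * B (2 * k + 2) = B (2 * k + 3) - x * B (2 * k + 1) := by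
  have hsol := comp_two_mul_add_mem_solSpace_ofOrderTwo hB
  have hB4 : B 4 = _ := hB 0
  have hB5 : B 5 = _ := hB 1
  simpa using eq_of_mem_solSpace_ofOrderTwo (Submodule.smul_mem _ s (hsol 2))
    (Submodule.sub_mem _ (hsol 3) (Submodule.smul_mem _ x (hsol 1)))
    (by simp [hB3, hB2, hB1]; ring) (by simp [hB5, hB4, hB3, hB2, hB1, hB0]; ring) k

theorem convergent_den_even_eq_num (hA0 : A 0 = x) (hA2 : A 2 = x * ((s + 1) * x + 1))
    (hB0 : B 0 = 1) (hB2 : B 2 = s * x + 1)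
    (hA : ∀ j, A (j + 4) = ((s + 1) * x + 1) * A (j + 2) - x * A j)
    (hB : ∀ j, B (j + 4) = ((s + 1) * x + 1) * B (j + 2) - x * B j) (k : ℕ) :
    x * B (2 * k + 2) = A (2 * k + 2) - x * A (2 * k) := by
  have hA4 : A 4 = _ := hA 0
  have hB4 : B 4 = _ := hB 0
  simpa using eq_of_mem_solSpace_ofOrderTwo
    (Submodule.smul_mem _ x (comp_two_mul_add_mem_solSpace_ofOrderTwo hB 2))
    (Submodule.sub_mem _ (comp_two_mul_add_mem_solSpace_ofOrderTwo hA 2)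
      (Submodule.smul_mem _ x (comp_two_mul_add_mem_solSpace_ofOrderTwo hA 0)))
    (by simp [hB2, hA2, hA0]; ring) (by simp [hB4, hA4, hB2, hA2, hB0, hA0]; ring) k

end Convergents

theorem stmt_16 (x s : ℝ) (A B : ℕ → ℝ)
    (hA0 : A 0 = x) (hA1 : A 1 = x * (s + 1))
    (hA2 : A 2 = x * ((s + 1) * x + 1)) (hA3 : A 3 = x * ((s + 1) ^ 2 * x + s))
    (hB0 : B 0 = 1) (hB1 : B 1 = s)
    (hB2 : B 2 = s * x + 1) (hB3 : B 3 = s * ((s + 1) * x + 1))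
    (hA : ∀ j, A (j + 4) = ((s + 1) * x + 1) * A (j + 2) - x * A j)
    (hB : ∀ j, B (j + 4) = ((s + 1) * x + 1) * B (j + 2) - x * B j) :
    (∀ j, 1 ≤ j → A (2 * j + 1) = (s + 1) * A (2 * j) - A (2 * j - 2)) ∧
    (∀ j, x * B (2 * j + 1) = s * A (2 * j)) ∧
    (∀ j, 1 ≤ j → s * B (2 * j) = B (2 * j + 1) - x * B (2 * j - 1)) ∧
    (∀ j, 1 ≤ j → x * B (2 * j) = A (2 * j) - x * A (2 * j - 2)) := by
  refine ⟨fun j hj => ?_, convergent_den_odd_eq_num hA0 hA2 hB1 hB3 hA hB, fun j hj => ?_,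
    fun j hj => ?_⟩ <;> obtain ⟨k, rfl⟩ := Nat.exists_eq_add_of_le' hj
  · simpa [mul_add] using convergent_num_odd_step hA0 hA1 hA2 hA3 hA k
  · simpa [mul_add] using convergent_den_even_step hB0 hB1 hB2 hB3 hB k
  · simpa [mul_add] using convergent_den_even_eq_num hA0 hA2 hB0 hB2 hA hB k
end

section
/- For all real numbers x and s: for every j ≥ 0, s·A (2j)² − ((s+1)x−1)·A (2j)·B (2j) − x·B (2j)² = −x^(j+2), and for every j ≥ 1, s·A (2j−1)² − ((s+1)x−1)·A (2j−1)·B (2j−1) − x·B (2j−1)² = s·x^j. -/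
/-!
With `t = (s + 1) x + 1`, the vectors `v k = (A (2k + n), B (2k + n))` of either parity class `n`
satisfy `v (k + 2) = t • v (k + 1) - x • v k`. For a quadratic form `Q`, expanding
`Q (t • v (k + 1) - x • v k)` shows that the two relations `Q (v (k + 1)) = x * Q (v k)` and
`polar Q (v (k + 1)) (v k) = t * Q (v k)` propagate from `k` to `k + 1`, so that
`Q (v k) = x ^ k * Q (v 0)` once they hold at `k = 0`. For
`Q (a, b) = s a² - ((s + 1) x - 1) a b - x b²` they do hold at `k = 0` for both parities, with
`Q (v 0) = -x²` for `n = 0` and `Q (v 0) = s x` for `n = 1`.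
-/

namespace QuadraticMap

variable {R M : Type*} [CommRing R] [AddCommGroup M] [Module R M]

theorem map_smul_sub_smul (Q : QuadraticForm R M) (a b : R) (u w : M) :
    Q (a • u - b • w) = a * a * Q u - a * b * polar Q u w + b * b * Q w := by
  rw [sub_eq_add_neg, ← neg_smul, QuadraticMap.map_add Q, QuadraticMap.map_smul,
    QuadraticMap.map_smul, polar_smul_left, polar_smul_right]
  simp only [smul_eq_mul]
  ring

variable {Q : QuadraticForm R M} {t x : R} {v : ℕ → M}

theorem map_succ_and_polar_of_recurrence (hv : ∀ k, v (k + 2) = t • v (k + 1) - x • v k)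
    (h₁ : Q (v 1) = x * Q (v 0)) (hpolar : polar Q (v 1) (v 0) = t * Q (v 0)) (k : ℕ) :
    Q (v (k + 1)) = x * Q (v k) ∧ polar Q (v (k + 1)) (v k) = t * Q (v k) := by
  induction k with
  | zero => exact ⟨h₁, hpolar⟩
  | succ k ih =>
    obtain ⟨hQ, hP⟩ := ih
    rw [hv, map_smul_sub_smul, polar_sub_left, polar_smul_left, polar_smul_left, polar_self,
      polar_comm Q (v k), hP, hQ]
    constructor
    · ring
    · simp only [smul_eq_mul, nsmul_eq_mul]
      push_cast
      ring

theorem map_eq_pow_mul_of_recurrence (hv : ∀ k, v (k + 2) = t • v (k + 1) - x • v k)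
    (h₁ : Q (v 1) = x * Q (v 0)) (hpolar : polar Q (v 1) (v 0) = t * Q (v 0)) (k : ℕ) :
    Q (v k) = x ^ k * Q (v 0) := by
  induction k with
  | zero => simp
  | succ k ih =>
    rw [(map_succ_and_polar_of_recurrence hv h₁ hpolar k).1, ih]
    ring

end QuadraticMap

section ConvergentForm

open QuadraticMap
open LinearMap (fst snd)

variable {R : Type*} [CommRing R]

def convergentForm (x s : R) : QuadraticForm R (R × R) :=
  s • linMulLin (fst R R R) (fst R R R) - ((s + 1) * x - 1) • linMulLin (fst R R R) (snd R R R)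
    - x • linMulLin (snd R R R) (snd R R R)

theorem convergentForm_apply (x s a b : R) :
    convergentForm x s (a, b) = s * a ^ 2 - ((s + 1) * x - 1) * a * b - x * b ^ 2 := by
  simp only [convergentForm, sub_apply, smul_apply, linMulLin_apply, LinearMap.fst_apply,
    LinearMap.snd_apply, smul_eq_mul]
  ring

theorem polar_convergentForm (x s a b c d : R) :
    polar (convergentForm x s) (a, b) (c, d) =
      2 * s * a * c - ((s + 1) * x - 1) * (a * d + b * c) - 2 * x * b * d := by
  simp only [polar, Prod.mk_add_mk, convergentForm_apply]
  ring

end ConvergentForm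

theorem stmt_17 (x s : ℝ) (A B : ℕ → ℝ)
    (hA0 : A 0 = x) (hA1 : A 1 = x * (s + 1))
    (hA2 : A 2 = x * ((s + 1) * x + 1)) (hA3 : A 3 = x * ((s + 1) ^ 2 * x + s))
    (hB0 : B 0 = 1) (hB1 : B 1 = s)
    (hB2 : B 2 = s * x + 1) (hB3 : B 3 = s * ((s + 1) * x + 1))
    (hA : ∀ j, A (j + 4) = ((s + 1) * x + 1) * A (j + 2) - x * A j)
    (hB : ∀ j, B (j + 4) = ((s + 1) * x + 1) * B (j + 2) - x * B j) :
    (∀ j, s * A (2 * j) ^ 2 - ((s + 1) * x - 1) * A (2 * j) * B (2 * j)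
        - x * B (2 * j) ^ 2 = -x ^ (j + 2)) ∧
    (∀ j, 1 ≤ j → s * A (2 * j - 1) ^ 2
        - ((s + 1) * x - 1) * A (2 * j - 1) * B (2 * j - 1)
        - x * B (2 * j - 1) ^ 2 = s * x ^ j) := by
  let v : ℕ → ℕ → ℝ × ℝ := fun n k => (A (2 * k + n), B (2 * k + n))
  have hv (n k : ℕ) : v n (k + 2) = ((s + 1) * x + 1) • v n (k + 1) - x • v n k := by
    simp only [v, show 2 * (k + 2) + n = 2 * k + n + 4 by ring,
      show 2 * (k + 1) + n = 2 * k + n + 2 by ring, hA, hB, Prod.smul_mk, Prod.mk_sub_mk,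
      smul_eq_mul]
  have hEven := QuadraticMap.map_eq_pow_mul_of_recurrence (Q := convergentForm x s) (hv 0)
    (by simp only [v, convergentForm_apply, hA0, hA2, hB0, hB2]; ring)
    (by simp only [v, polar_convergentForm, convergentForm_apply, hA0, hA2, hB0, hB2]; ring)
  have hOdd := QuadraticMap.map_eq_pow_mul_of_recurrence (Q := convergentForm x s) (hv 1)
    (by simp only [v, convergentForm_apply, hA1, hA3, hB1, hB3]; ring)
    (by simp only [v, polar_convergentForm, convergentForm_apply, hA1, hA3, hB1, hB3]; ring)
  simp only [v, convergentForm_apply, mul_zero, zero_add, add_zero, hA0, hB0, hA1, hB1]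
    at hEven hOdd
  refine ⟨fun j => ?_, fun j hj => ?_⟩
  · rw [hEven]
    ring
  · obtain ⟨k, rfl⟩ := Nat.exists_eq_add_of_le hj
    rw [show 2 * (1 + k) - 1 = 2 * k + 1 by omega, hOdd]
    ring
end

section
/- Let x and s be positive integers, regarded as real numbers. Then the sequence of convergents k ↦ A k / B k of F(x,s) converges (as k → ∞) to (((s+1)x − 1) + √(((s+1)x − 1)² + 4sx))/(2s), the positive root of the quadratic P(x,z,s) = s·z² − ((s+1)x − 1)·z − x. -/
/-!
The even- and odd-indexed terms of `A` and `B` each satisfy the recurrence with characteristic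
polynomial `z ^ 2 - ((s + 1) * x + 1) * z + x`, whose roots are `t = s * L + 1 > u > 0`, where `L`
is the claimed limit. By Binet's formula every such sequence is `α t ^ k + β u ^ k`, so a quotient
of two of them tends to the quotient of their `t`-components; from the initial values this is `L`
for both subsequences.
-/

open Filter Topology

theorem Filter.Tendsto.of_even_of_odd {β : Type*} {f : ℕ → β} {l : Filter β}
    (he : Tendsto (fun k => f (2 * k)) atTop l) (ho : Tendsto (fun k => f (2 * k + 1)) atTop l) :
    Tendsto f atTop l := by
  intro U hU
  obtain ⟨N₁, h₁⟩ := eventually_atTop.mp (he hU)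
  obtain ⟨N₂, h₂⟩ := eventually_atTop.mp (ho hU)
  refine eventually_atTop.mpr ⟨2 * max N₁ N₂, fun n hn => ?_⟩
  obtain ⟨k, rfl | rfl⟩ := Nat.even_or_odd' n
  · exact h₁ k (by omega)
  · exact h₂ k (by omega)

section LinearRecurrence

variable {R : Type*} [CommRing R]

/-- Binet's formula, multiplied through by `t - u` so that it also holds when `t = u`. -/
theorem sub_mul_eq_of_recurrence {c : ℕ → R} {t u : R}
    (hc : ∀ i, c (i + 2) = (t + u) * c (i + 1) - t * u * c i) (i : ℕ) :
    (t - u) * c i = (c 1 - u * c 0) * t ^ i - (c 1 - t * c 0) * u ^ i := by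
  induction i using Nat.twoStepInduction with
  | zero => ring
  | one => ring
  | more i ih₀ ih₁ =>
    rw [hc]
    linear_combination (t + u) * ih₁ - t * u * ih₀

theorem recurrence_comp_two_mul_add {c : ℕ → R} {p q : R}
    (hc : ∀ j, c (j + 4) = p * c (j + 2) - q * c j) (r k : ℕ) :
    c (2 * (k + 2) + r) = p * c (2 * (k + 1) + r) - q * c (2 * k + r) := by
  rw [show 2 * (k + 2) + r = 2 * k + r + 4 by ring, show 2 * (k + 1) + r = 2 * k + r + 2 by ring]
  exact hc _

end LinearRecurrence

theorem tendsto_div_of_recurrence_s19 {a b : ℕ → ℝ} {t u L : ℝ} (hut : |u| < t)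
    (ha : ∀ i, a (i + 2) = (t + u) * a (i + 1) - t * u * a i)
    (hb : ∀ i, b (i + 2) = (t + u) * b (i + 1) - t * u * b i)
    (hb₀ : b 1 - u * b 0 ≠ 0) (hL : a 1 - u * a 0 = L * (b 1 - u * b 0)) :
    Tendsto (fun i => a i / b i) atTop (𝓝 L) := by
  have ht : 0 < t := (abs_nonneg u).trans_lt hut
  have htu : t - u ≠ 0 := sub_ne_zero.mpr ((le_abs_self u).trans_lt hut).ne'
  have hr : Tendsto (fun i => (u / t) ^ i) atTop (𝓝 0) :=
    tendsto_pow_atTop_nhds_zero_of_abs_lt_one <| by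
      rwa [abs_div, abs_of_pos ht, div_lt_one ht]
  have scaled : ∀ c : ℕ → ℝ, (∀ i, c (i + 2) = (t + u) * c (i + 1) - t * u * c i) → ∀ i,
      (t - u) / t ^ i * c i = (c 1 - u * c 0) - (c 1 - t * c 0) * (u / t) ^ i := by
    intro c hc i
    rw [div_mul_eq_mul_div, sub_mul_eq_of_recurrence hc, div_pow]
    field_simp
  have hlim : Tendsto (fun i => a i / b i) atTop (𝓝 ((a 1 - u * a 0) / (b 1 - u * b 0))) := by
    have := ((tendsto_const_nhds (x := a 1 - u * a 0)).sub (hr.const_mul (a 1 - t * a 0))).div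
      ((tendsto_const_nhds (x := b 1 - u * b 0)).sub (hr.const_mul (b 1 - t * b 0))) (by simpa)
    simp only [mul_zero, sub_zero] at this
    refine this.congr fun i => ?_
    rw [Pi.div_apply, ← scaled a ha, ← scaled b hb, mul_div_mul_left _ _ (by positivity)]
  rwa [hL, mul_div_cancel_right₀ _ hb₀] at hlim

noncomputable def convergentLimit (x s : ℝ) : ℝ :=
  (((s + 1) * x - 1) + Real.sqrt (((s + 1) * x - 1) ^ 2 + 4 * s * x)) / (2 * s)

section ConvergentLimit

variable {x s : ℝ}

theorem two_mul_mul_convergentLimit (hs : s ≠ 0) :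
    2 * s * convergentLimit x s =
      (s + 1) * x - 1 + Real.sqrt (((s + 1) * x - 1) ^ 2 + 4 * s * x) :=
  mul_div_cancel₀ _ (mul_ne_zero two_ne_zero hs)

theorem convergentLimit_quadratic_eq_zero (hs : s ≠ 0) (hsx : 0 ≤ s * x) :
    s * convergentLimit x s ^ 2 - ((s + 1) * x - 1) * convergentLimit x s - x = 0 := by
  have hL := two_mul_mul_convergentLimit (x := x) hs
  set L := convergentLimit x s
  set q := (s + 1) * x - 1
  have hd := Real.sq_sqrt (show 0 ≤ q ^ 2 + 4 * s * x by nlinarith [sq_nonneg q])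
  have : 4 * s * (s * L ^ 2 - q * L - x) = 0 := by
    linear_combination (2 * s * L - q + Real.sqrt (q ^ 2 + 4 * s * x)) * hL + hd
  simpa [hs] using this

theorem convergentLimit_pos (hs : 0 < s) (hsx : 0 < s * x) : 0 < convergentLimit x s := by
  have hq : |(s + 1) * x - 1| < Real.sqrt (((s + 1) * x - 1) ^ 2 + 4 * s * x) := by
    rw [Real.lt_sqrt (abs_nonneg _), sq_abs]
    linarith
  have := two_mul_mul_convergentLimit (x := x) hs.ne'
  nlinarith [neg_abs_le ((s + 1) * x - 1)]

theorem exists_root_lt_mul_convergentLimit_add_one (hx : 0 < x) (hs : 0 < s) :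
    ∃ u, 0 < u ∧ u < s * convergentLimit x s + 1 ∧
      s * convergentLimit x s + 1 + u = (s + 1) * x + 1 ∧
      (s * convergentLimit x s + 1) * u = x := by
  have hroot := convergentLimit_quadratic_eq_zero hs.ne' (mul_pos hs hx).le
  have hpos := convergentLimit_pos hs (mul_pos hs hx)
  have hdom := two_mul_mul_convergentLimit (x := x) hs.ne'
  have hsqrt : 0 < Real.sqrt (((s + 1) * x - 1) ^ 2 + 4 * s * x) :=
    Real.sqrt_pos.mpr (by nlinarith [sq_nonneg ((s + 1) * x - 1), mul_pos hs hx])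
  have hprod : (s * convergentLimit x s + 1) * ((s + 1) * x - s * convergentLimit x s) = x := by
    linear_combination (-s) * hroot
  refine ⟨(s + 1) * x - s * convergentLimit x s, ?_, by linarith, by ring, hprod⟩
  exact pos_of_mul_pos_right (hprod ▸ hx) (by positivity)

end ConvergentLimit

theorem stmt_19 (m n : ℕ) (hm : 0 < m) (hn : 0 < n)
    (x s : ℝ) (hxm : x = (m : ℝ)) (hsn : s = (n : ℝ)) (A B : ℕ → ℝ)
    (hA0 : A 0 = x) (hA1 : A 1 = x * (s + 1))
    (hA2 : A 2 = x * ((s + 1) * x + 1)) (hA3 : A 3 = x * ((s + 1) ^ 2 * x + s))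
    (hB0 : B 0 = 1) (hB1 : B 1 = s)
    (hB2 : B 2 = s * x + 1) (hB3 : B 3 = s * ((s + 1) * x + 1))
    (hA : ∀ j, A (j + 4) = ((s + 1) * x + 1) * A (j + 2) - x * A j)
    (hB : ∀ j, B (j + 4) = ((s + 1) * x + 1) * B (j + 2) - x * B j) :
    Filter.Tendsto (fun k => A k / B k) Filter.atTop
      (nhds ((((s + 1) * x - 1) + Real.sqrt (((s + 1) * x - 1) ^ 2 + 4 * s * x))
        / (2 * s))) ∧
    s * ((((s + 1) * x - 1) + Real.sqrt (((s + 1) * x - 1) ^ 2 + 4 * s * x))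
        / (2 * s)) ^ 2
      - ((s + 1) * x - 1) *
        ((((s + 1) * x - 1) + Real.sqrt (((s + 1) * x - 1) ^ 2 + 4 * s * x))
          / (2 * s))
      - x = 0 ∧
    0 < (((s + 1) * x - 1) + Real.sqrt (((s + 1) * x - 1) ^ 2 + 4 * s * x))
        / (2 * s) := by
  have hx : 0 < x := hxm ▸ Nat.cast_pos.mpr hm
  have hs : 0 < s := hsn ▸ Nat.cast_pos.mpr hn
  change Tendsto _ _ (𝓝 (convergentLimit x s)) ∧
    s * convergentLimit x s ^ 2 - ((s + 1) * x - 1) * convergentLimit x s - x = 0 ∧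
    0 < convergentLimit x s
  have hroot := convergentLimit_quadratic_eq_zero hs.ne' (mul_pos hs hx).le
  have hpos := convergentLimit_pos hs (mul_pos hs hx)
  obtain ⟨u, hu, hut, hsum, hprod⟩ := exists_root_lt_mul_convergentLimit_add_one hx hs
  set L := convergentLimit x s
  rw [← hsum, ← hprod] at hA hB
  refine ⟨Tendsto.of_even_of_odd ?_ ?_, hroot, hpos⟩
  · refine tendsto_div_of_recurrence_s19 (by rwa [abs_of_pos hu]) (recurrence_comp_two_mul_add hA 0)
      (recurrence_comp_two_mul_add hB 0) ?_ ?_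
    · show B 2 - u * B 0 ≠ 0
      have hu1 : L * (1 - u) = x := by linear_combination hroot - L * hsum
      rw [hB2, hB0, mul_one, add_sub_assoc]
      exact (add_pos (mul_pos hs hx) (pos_of_mul_pos_right (hu1 ▸ hx) hpos.le)).ne'
    · show A 2 - u * A 0 = L * (B 2 - u * B 0)
      rw [hA2, hA0, hB2, hB0]
      linear_combination (-1) * hroot + (L - x) * hsum
  · refine tendsto_div_of_recurrence_s19 (by rwa [abs_of_pos hu]) (recurrence_comp_two_mul_add hA 1)
      (recurrence_comp_two_mul_add hB 1) ?_ ?_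
    · show B 3 - u * B 1 ≠ 0
      rw [hB3, hB1, ← hsum, show s * (s * L + 1 + u) - u * s = s * (s * L + 1) by ring]
      positivity
    · show A 3 - u * A 1 = L * (B 3 - u * B 1)
      rw [hA3, hA1, hB3, hB1]
      linear_combination (-s) * hroot + (L * s - x * (s + 1)) * hsum
end
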